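/- Let A, W be m×m real symmetric positive definite matrices, b ∈ ℝ^m, w* = A⁻¹b, and γ ∈ (0,1). Let S_0, S_1, …, S_t be matrices (each S_k ∈ ℝ^{m×τ_k} with Sᵀ_k A W⁻¹ A S_k invertible) and define iterates by w^{k+1} = w^k − γ ∇_W f_{S_k}(w^k) from any w^0 ∈ ℝ^m. Then Σ_{k=0}^{t} f_{S_k}(w^k) ≤ ‖w^0 − w*‖²_W / (2 γ (1 − γ)). -/

import Mathlib

open Matrix

/-- `H_S = S (Sᵀ A W⁻¹ A S)⁻¹ Sᵀ`. -/
noncomputable def sketchH {m τ : ℕ} (A W : Matrix (Fin m) (Fin m) ℝ)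
    (S : Matrix (Fin m) (Fin τ) ℝ) : Matrix (Fin m) (Fin m) ℝ :=
  S * (Sᵀ * A * W⁻¹ * A * S)⁻¹ * Sᵀ

/-- `f_S(w) = ½ (A w − b)ᵀ H_S (A w − b)`. -/
noncomputable def sketchF {m τ : ℕ} (A W : Matrix (Fin m) (Fin m) ℝ)
    (S : Matrix (Fin m) (Fin τ) ℝ) (b w : Fin m → ℝ) : ℝ :=
  (1 / 2) * ((A *ᵥ w - b) ⬝ᵥ (sketchH A W S *ᵥ (A *ᵥ w - b)))

/-- `∇_W f_S(w) = W⁻¹ A H_S (A w − b)`. -/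
noncomputable def sketchGrad {m τ : ℕ} (A W : Matrix (Fin m) (Fin m) ℝ)
    (S : Matrix (Fin m) (Fin τ) ℝ) (b w : Fin m → ℝ) : Fin m → ℝ :=
  W⁻¹ *ᵥ (A *ᵥ (sketchH A W S *ᵥ (A *ᵥ w - b)))

/-- `uᵀ W u`, the squared `W`-norm. -/
def normSqW {m : ℕ} (W : Matrix (Fin m) (Fin m) ℝ) (u : Fin m → ℝ) : ℝ :=
  u ⬝ᵥ (W *ᵥ u)

section aux
variable {m τ : ℕ} (A W : Matrix (Fin m) (Fin m) ℝ) (S : Matrix (Fin m) (Fin τ) ℝ)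

lemma dot_symm (M : Matrix (Fin m) (Fin m) ℝ) (hM : Mᵀ = M) (x y : Fin m → ℝ) :
    x ⬝ᵥ (M *ᵥ y) = y ⬝ᵥ (M *ᵥ x) := by
  rw [dotProduct_mulVec, ← mulVec_transpose, hM, dotProduct_comm]

lemma sketchH_transpose (hA : Aᵀ = A) (hW : Wᵀ = W) :
    (sketchH A W S)ᵀ = sketchH A W S := by
  simp [sketchH, Matrix.transpose_mul, transpose_nonsing_inv, hA, hW, Matrix.mul_assoc]

lemma sketchH_proj (hS : IsUnit (Sᵀ * A * W⁻¹ * A * S)) :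
    sketchH A W S * (A * W⁻¹ * A) * sketchH A W S = sketchH A W S := by
  have hdet : IsUnit (Sᵀ * A * W⁻¹ * A * S).det :=
    (Matrix.isUnit_iff_isUnit_det _).mp hS
  have h1 : (Sᵀ * A * W⁻¹ * A * S)⁻¹ * (Sᵀ * A * W⁻¹ * A * S) = 1 :=
    Matrix.nonsing_inv_mul _ hdet
  calc sketchH A W S * (A * W⁻¹ * A) * sketchH A W S
      = S * ((Sᵀ * A * W⁻¹ * A * S)⁻¹ * (Sᵀ * A * W⁻¹ * A * S)
          * (Sᵀ * A * W⁻¹ * A * S)⁻¹) * Sᵀ := by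
        simp only [sketchH, Matrix.mul_assoc]
    _ = sketchH A W S := by rw [h1, Matrix.one_mul, sketchH, Matrix.mul_assoc]

lemma sketchH_posSemidef (hA : A.PosDef) (hW : W.PosDef) :
    (sketchH A W S).PosSemidef := by
  have hAt : Aᴴ = A := hA.isHermitian
  have hP : (A * W⁻¹ * A).PosSemidef := by
    have := hW.inv.posSemidef.conjTranspose_mul_mul_same A
    rwa [hAt] at this
  have hM : (Sᵀ * A * W⁻¹ * A * S).PosSemidef := by
    have := hP.conjTranspose_mul_mul_same S
    rwa [conjTranspose_eq_transpose_of_trivial, ← Matrix.mul_assoc, ← Matrix.mul_assoc] at this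
  have hMinv := hM.inv
  have := hMinv.mul_mul_conjTranspose_same S
  rwa [conjTranspose_eq_transpose_of_trivial] at this

end aux

lemma mulVec_dot {m : ℕ} (M : Matrix (Fin m) (Fin m) ℝ) (x z : Fin m → ℝ) :
    (M *ᵥ x) ⬝ᵥ z = x ⬝ᵥ (Mᵀ *ᵥ z) := by
  rw [dotProduct_comm, dotProduct_mulVec, ← mulVec_transpose, dotProduct_comm]

lemma sketchF_nonneg {m τ : ℕ} (A W : Matrix (Fin m) (Fin m) ℝ)
    (S : Matrix (Fin m) (Fin τ) ℝ) (hA : A.PosDef) (hW : W.PosDef) (b w : Fin m → ℝ) :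
    0 ≤ sketchF A W S b w := by
  have h := (sketchH_posSemidef A W S hA hW).dotProduct_mulVec_nonneg (A *ᵥ w - b)
  simp only [star_trivial] at h
  have : (0:ℝ) ≤ (A *ᵥ w - b) ⬝ᵥ (sketchH A W S *ᵥ (A *ᵥ w - b)) := h
  unfold sketchF; linarith

lemma step_identity {m τ : ℕ} (A W : Matrix (Fin m) (Fin m) ℝ)
    (S : Matrix (Fin m) (Fin τ) ℝ) (hA : A.PosDef) (hW : W.PosDef)
    (hS : IsUnit (Sᵀ * A * W⁻¹ * A * S)) (b wstar w : Fin m → ℝ)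
    (hb : A *ᵥ wstar = b) (γ : ℝ) :
    normSqW W ((w - γ • sketchGrad A W S b w) - wstar)
      = normSqW W (w - wstar) - γ * (2 - γ) * (2 * sketchF A W S b w) := by
  have hAt : Aᵀ = A := by
    rw [← conjTranspose_eq_transpose_of_trivial]; exact hA.isHermitian
  have hWt : Wᵀ = W := by
    rw [← conjTranspose_eq_transpose_of_trivial]; exact hW.isHermitian
  have hWdet : IsUnit W.det := (Matrix.isUnit_iff_isUnit_det _).mp hW.isUnit
  have hWW : W * W⁻¹ = 1 := Matrix.mul_nonsing_inv W hWdet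
  have hWW' : W⁻¹ * W = 1 := Matrix.nonsing_inv_mul W hWdet
  set H := sketchH A W S with hH
  have hHt : Hᵀ = H := sketchH_transpose A W S hAt hWt
  have hHP : H * (A * W⁻¹ * A) * H = H := sketchH_proj A W S hS
  set r : Fin m → ℝ := w - wstar with hr
  set v : Fin m → ℝ := A *ᵥ w - b with hvdef
  have hv : v = A *ᵥ r := by rw [hvdef, hr, mulVec_sub, hb]
  set g : Fin m → ℝ := sketchGrad A W S b w with hg
  have hgv : g = (W⁻¹ * (A * H)) *ᵥ v := by
    rw [hg, sketchGrad, ← hH, ← hvdef, mulVec_mulVec, mulVec_mulVec, Matrix.mul_assoc]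
  have hWg : W *ᵥ g = (A * H) *ᵥ v := by
    rw [hgv, mulVec_mulVec, ← Matrix.mul_assoc, hWW, Matrix.one_mul]
  have c1 : r ⬝ᵥ (W *ᵥ g) = v ⬝ᵥ (H *ᵥ v) := by
    rw [hWg, dotProduct_mulVec, ← mulVec_transpose, Matrix.transpose_mul, hAt, hHt,
      ← mulVec_mulVec, ← hv, dotProduct_comm]
  have c2 : g ⬝ᵥ (W *ᵥ r) = v ⬝ᵥ (H *ᵥ v) := by
    rw [hgv, mulVec_dot, Matrix.transpose_mul, Matrix.transpose_mul, hAt, hHt,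
      transpose_nonsing_inv, hWt, mulVec_mulVec, Matrix.mul_assoc (H * A),
      hWW', Matrix.mul_one, ← mulVec_mulVec, ← hv]
  have c3 : g ⬝ᵥ (W *ᵥ g) = v ⬝ᵥ (H *ᵥ v) := by
    rw [hWg, hgv, mulVec_dot, mulVec_mulVec, Matrix.transpose_mul, Matrix.transpose_mul,
      hAt, hHt, transpose_nonsing_inv, hWt]
    have heq : H * A * W⁻¹ * (A * H) = H * (A * W⁻¹ * A) * H := by
      simp only [Matrix.mul_assoc]
    have : H * A * W⁻¹ * (A * H) = H := heq.trans hHP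
    rw [Matrix.mul_assoc (H * A), ← Matrix.mul_assoc, this]
  have expand : normSqW W (w - γ • g - wstar)
      = r ⬝ᵥ (W *ᵥ r) - γ * (g ⬝ᵥ (W *ᵥ r)) - γ * (r ⬝ᵥ (W *ᵥ g))
        + γ * γ * (g ⬝ᵥ (W *ᵥ g)) := by
    have hrw : w - γ • g - wstar = r - γ • g := by rw [hr]; abel
    rw [hrw]
    simp only [normSqW, mulVec_sub, mulVec_smul, sub_dotProduct, dotProduct_sub,
      smul_dotProduct, dotProduct_smul, smul_eq_mul]
    ring
  rw [expand, c1, c2, c3]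
  have hF : sketchF A W S b w = (1/2) * (v ⬝ᵥ (H *ᵥ v)) := rfl
  rw [hF]
  show r ⬝ᵥ (W *ᵥ r) - _ - _ + _ = r ⬝ᵥ (W *ᵥ r) - _
  ring

/-- **Telescoped function-value bound along a sketch-and-project trajectory:**
for iterates `w^{k+1} = w^k − γ ∇_W f_{S_k}(w^k)` with `γ ∈ (0,1)`,
`Σ_{k=0}^{t} f_{S_k}(w^k) ≤ ‖w⁰ − w*‖²_W / (2γ(1−γ))`. -/
theorem sum_f_along_trajectory_bound {m : ℕ}
    (A W : Matrix (Fin m) (Fin m) ℝ) (hA : A.PosDef) (hW : W.PosDef)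
    (b wstar : Fin m → ℝ) (hwstar : wstar = A⁻¹ *ᵥ b)
    (γ : ℝ) (hγ0 : 0 < γ) (hγ1 : γ < 1)
    (τ : ℕ → ℕ) (S : (k : ℕ) → Matrix (Fin m) (Fin (τ k)) ℝ)
    (hS : ∀ k, IsUnit ((S k)ᵀ * A * W⁻¹ * A * S k))
    (w0 : Fin m → ℝ) (w : ℕ → Fin m → ℝ) (hw0 : w 0 = w0)
    (hw : ∀ k, w (k + 1) = w k - γ • sketchGrad A W (S k) b (w k))
    (t : ℕ) :
    ∑ k ∈ Finset.range (t + 1), sketchF A W (S k) b (w k)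
      ≤ normSqW W (w0 - wstar) / (2 * γ * (1 - γ)) := by
  have hAdet : IsUnit A.det := (Matrix.isUnit_iff_isUnit_det _).mp hA.isUnit
  have hb : A *ᵥ wstar = b := by
    rw [hwstar, mulVec_mulVec, Matrix.mul_nonsing_inv A hAdet, one_mulVec]
  set N : ℕ → ℝ := fun k => normSqW W (w k - wstar) with hN
  have hstep : ∀ k, N (k + 1)
      = N k - γ * (2 - γ) * (2 * sketchF A W (S k) b (w k)) := by
    intro k
    have h := step_identity A W (S k) hA hW (hS k) b wstar (w k) hb γ
    simp only [hN]
    rw [hw k]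
    exact h
  have hF : ∀ k, 0 ≤ sketchF A W (S k) b (w k) :=
    fun k => sketchF_nonneg A W (S k) hA hW b (w k)
  have key : ∀ k, 2 * γ * (1 - γ) * sketchF A W (S k) b (w k) ≤ N k - N (k + 1) := by
    intro k
    rw [hstep k]
    nlinarith [hF k, hγ0.le]
  have hsum : ∑ k ∈ Finset.range (t + 1),
      2 * γ * (1 - γ) * sketchF A W (S k) b (w k) ≤ N 0 - N (t + 1) := by
    calc ∑ k ∈ Finset.range (t + 1), 2 * γ * (1 - γ) * sketchF A W (S k) b (w k)
        ≤ ∑ k ∈ Finset.range (t + 1), (N k - N (k + 1)) :=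
          Finset.sum_le_sum fun k _ => key k
      _ = N 0 - N (t + 1) := Finset.sum_range_sub' N (t + 1)
  have hNt : 0 ≤ N (t + 1) := by
    have h := hW.posSemidef.dotProduct_mulVec_nonneg (w (t + 1) - wstar)
    simp only [star_trivial] at h
    exact h
  have hpos : 0 < 2 * γ * (1 - γ) := by nlinarith
  rw [le_div_iff₀ hpos]
  have h2 : (∑ k ∈ Finset.range (t + 1), sketchF A W (S k) b (w k)) * (2 * γ * (1 - γ))
      = ∑ k ∈ Finset.range (t + 1), 2 * γ * (1 - γ) * sketchF A W (S k) b (w k) := by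
    rw [Finset.sum_mul]
    exact Finset.sum_congr rfl fun k _ => mul_comm _ _
  have hN0 : N 0 = normSqW W (w0 - wstar) := by rw [hN]; simp [hw0]
  rw [h2]
  calc ∑ k ∈ Finset.range (t + 1), 2 * γ * (1 - γ) * sketchF A W (S k) b (w k)
      ≤ N 0 - N (t + 1) := hsum
    _ ≤ N 0 := by linarith
    _ = normSqW W (w0 - wstar) := hN0
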